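/- Two sampling nets φ⁽¹⁾, φ⁽²⁾ indexed by the same directed set Λ are S-equivalent (for every m and every bounded γ : X → ℝ^m the limit-point sets of their nets of averages coincide) if and only if their regularities P_{φ⁽¹⁾} and P_{φ⁽²⁾} are equal. -/

import Mathlib

open BoundedContinuousFunction Filter Topology

noncomputable def PF (X : Type*) [TopologicalSpace X] [DiscreteTopology X] :
    Set (WeakDual ℝ (X →ᵇ ℝ)) :=
  {p | (∀ f : X →ᵇ ℝ, (∀ x, 0 ≤ f x) → 0 ≤ p f) ∧ p 1 = 1}

noncomputable def emp {X : Type*} [TopologicalSpace X] [DiscreteTopology X]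
    {n : ℕ} (v : Fin n → X) : WeakDual ℝ (X →ᵇ ℝ) :=
  ((n : ℝ)⁻¹ • ∑ i, (evalCLM ℝ (v i) : (X →ᵇ ℝ) →L[ℝ] ℝ) : (X →ᵇ ℝ) →L[ℝ] ℝ)

section Aux

variable {X : Type*} [TopologicalSpace X] [DiscreteTopology X]

lemma emp_apply {n : ℕ} (v : Fin n → X) (f : X →ᵇ ℝ) :
    emp v f = (n : ℝ)⁻¹ * ∑ i, f (v i) := by
  show ((n : ℝ)⁻¹ • ∑ i, (evalCLM ℝ (v i) : (X →ᵇ ℝ) →L[ℝ] ℝ) :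
      (X →ᵇ ℝ) →L[ℝ] ℝ) f = _
  rw [ContinuousLinearMap.smul_apply, ContinuousLinearMap.sum_apply]
  simp [evalCLM_apply, smul_eq_mul]

lemma norm_emp_le {n : ℕ} (v : Fin n → X) :
    ‖WeakDual.toStrongDual (emp v)‖ ≤ 1 := by
  refine ContinuousLinearMap.opNorm_le_bound _ zero_le_one fun f => ?_
  have happ : WeakDual.toStrongDual (emp v) f = emp v f := rfl
  rw [happ, emp_apply, one_mul, Real.norm_eq_abs]
  calc |(n : ℝ)⁻¹ * ∑ i, f (v i)| = (n:ℝ)⁻¹ * |∑ i, f (v i)| := by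
        rw [abs_mul, abs_of_nonneg (by positivity : (0:ℝ) ≤ (n:ℝ)⁻¹)]
    _ ≤ (n:ℝ)⁻¹ * ∑ _i : Fin n, ‖f‖ := by
        refine mul_le_mul_of_nonneg_left ?_ (by positivity)
        refine (Finset.abs_sum_le_sum_abs _ _).trans (Finset.sum_le_sum fun i _ => ?_)
        exact f.norm_coe_le_norm (v i)
    _ ≤ ‖f‖ := by
        rw [Finset.sum_const, Finset.card_univ, Fintype.card_fin, nsmul_eq_mul]
        rcases Nat.eq_zero_or_pos n with h | h
        · subst h; simp
        · rw [← mul_assoc, inv_mul_cancel₀ (by exact_mod_cast h.ne' : (n:ℝ) ≠ 0), one_mul]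

lemma eval_continuous' (f : X →ᵇ ℝ) :
    Continuous fun q : WeakDual ℝ (X →ᵇ ℝ) => q f :=
  WeakBilin.eval_continuous _ f

variable {Λ : Type*} [Preorder Λ] [Nonempty Λ] [IsDirected Λ (· ≤ ·)]

/-- key direction using compactness (Banach-Alaoglu). -/
lemma avg_subset (n₁ n₂ : Λ → ℕ)
    (φ₁ : ∀ l : Λ, Fin (n₁ l) → X) (φ₂ : ∀ l : Λ, Fin (n₂ l) → X)
    (H : {p : WeakDual ℝ (X →ᵇ ℝ) | MapClusterPt p atTop fun l : Λ => emp (φ₁ l)} ⊆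
        {p : WeakDual ℝ (X →ᵇ ℝ) | MapClusterPt p atTop fun l : Λ => emp (φ₂ l)})
    (m : ℕ) (γ : Fin m → (X →ᵇ ℝ)) :
    {r : Fin m → ℝ |
        MapClusterPt r atTop fun l : Λ => fun j => (n₁ l : ℝ)⁻¹ * ∑ i, γ j (φ₁ l i)} ⊆
      {r : Fin m → ℝ |
        MapClusterPt r atTop fun l : Λ => fun j => (n₂ l : ℝ)⁻¹ * ∑ i, γ j (φ₂ l i)} := by
  intro r hr
  simp only [Set.mem_setOf_eq] at hr ⊢
  set g : WeakDual ℝ (X →ᵇ ℝ) → (Fin m → ℝ) := fun q j => q (γ j) with hg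
  have hgc : Continuous g := continuous_pi fun j => eval_continuous' (γ j)
  have havg₁ : (fun l : Λ => fun j => (n₁ l : ℝ)⁻¹ * ∑ i, γ j (φ₁ l i)) =
      fun l => g (emp (φ₁ l)) := by
    funext l j; simp [hg, emp_apply]
  have havg₂ : (fun l : Λ => fun j => (n₂ l : ℝ)⁻¹ * ∑ i, γ j (φ₂ l i)) =
      fun l => g (emp (φ₂ l)) := by
    funext l j; simp [hg, emp_apply]
  rw [havg₁] at hr
  rw [havg₂]
  -- get an ultrafilter along which averages₁ converge to r
  obtain ⟨U, hUle, hUt⟩ := mapClusterPt_iff_ultrafilter.1 hr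
  -- the emp net is in the compact closed ball
  set K : Set (WeakDual ℝ (X →ᵇ ℝ)) :=
    WeakDual.toStrongDual ⁻¹' Metric.closedBall (0 : StrongDual ℝ (X →ᵇ ℝ)) 1 with hKdef
  have hK : IsCompact K := WeakDual.isCompact_closedBall (𝕜 := ℝ) (E := X →ᵇ ℝ) 0 1
  have hmem : ∀ l, emp (φ₁ l) ∈ K := by
    intro l
    simp only [hKdef, Set.mem_preimage, Metric.mem_closedBall, dist_zero_right]
    exact (dist_zero_right (WeakDual.toStrongDual (emp (φ₁ l)))).trans_le (norm_emp_le (φ₁ l))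
  have hle : Filter.map (fun l => emp (φ₁ l)) (↑U : Filter Λ) ≤ 𝓟 K := by
    rw [le_principal_iff, mem_map]
    exact Filter.Eventually.of_forall hmem
  obtain ⟨p, hpK, hp⟩ := hK.exists_mapClusterPt (f := (↑U : Filter Λ)) (u := fun l => emp (φ₁ l)) hle
  have hpt : Tendsto (fun l => emp (φ₁ l)) ↑U (𝓝 p) := by
    have : ClusterPt p (Filter.map (fun l => emp (φ₁ l)) ↑U) := hp
    rw [show Filter.map (fun l => emp (φ₁ l)) ↑U = ↑(U.map fun l => emp (φ₁ l)) from rfl,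
      Ultrafilter.clusterPt_iff] at this
    exact this
  -- p is a cluster point of emp ∘ φ₁
  have hpreg : MapClusterPt p atTop fun l : Λ => emp (φ₁ l) :=
    mapClusterPt_iff_ultrafilter.2 ⟨U, hUle, hpt⟩
  have hpreg₂ : MapClusterPt p atTop fun l : Λ => emp (φ₂ l) := H hpreg
  -- g p = r
  have hgp : g p = r := by
    have h1 : Tendsto (fun l => g (emp (φ₁ l))) ↑U (𝓝 (g p)) :=
      (hgc.tendsto p).comp hpt
    exact tendsto_nhds_unique h1 hUt
  obtain ⟨V, hVle, hVt⟩ := mapClusterPt_iff_ultrafilter.1 hpreg₂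
  exact mapClusterPt_iff_ultrafilter.2
    ⟨V, hVle, hgp ▸ (hgc.tendsto p).comp hVt⟩

/-- other direction: no compactness needed, uses the weak-* neighborhood basis. -/
lemma reg_subset (n₁ n₂ : Λ → ℕ)
    (φ₁ : ∀ l : Λ, Fin (n₁ l) → X) (φ₂ : ∀ l : Λ, Fin (n₂ l) → X)
    (H : ∀ (m : ℕ) (γ : Fin m → (X →ᵇ ℝ)),
        {r : Fin m → ℝ |
            MapClusterPt r atTop fun l : Λ => fun j => (n₁ l : ℝ)⁻¹ * ∑ i, γ j (φ₁ l i)} ⊆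
          {r : Fin m → ℝ |
            MapClusterPt r atTop fun l : Λ => fun j => (n₂ l : ℝ)⁻¹ * ∑ i, γ j (φ₂ l i)}) :
    {p : WeakDual ℝ (X →ᵇ ℝ) | MapClusterPt p atTop fun l : Λ => emp (φ₁ l)} ⊆
      {p : WeakDual ℝ (X →ᵇ ℝ) | MapClusterPt p atTop fun l : Λ => emp (φ₂ l)} := by
  intro p hp
  simp only [Set.mem_setOf_eq] at hp ⊢
  rw [mapClusterPt_iff_frequently]
  intro s hs
  -- unpack a basic weak-* neighborhood
  have hemb : IsInducing (fun (q : WeakDual ℝ (X →ᵇ ℝ)) (f : X →ᵇ ℝ) =>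
      (topDualPairing ℝ (X →ᵇ ℝ)) q f) :=
    (WeakBilin.isEmbedding ContinuousLinearMap.coe_injective).isInducing
  rw [hemb.nhds_eq_comap, mem_comap] at hs
  obtain ⟨w, hw, hws⟩ := hs
  rw [nhds_pi, Filter.mem_pi] at hw
  obtain ⟨I, hIfin, t, ht, htw⟩ := hw
  -- enumerate I
  haveI := hIfin.fintype
  set m := hIfin.toFinset.card with hm
  set e := hIfin.toFinset.equivFin with he
  set γ : Fin m → (X →ᵇ ℝ) := fun j => (e.symm j : X →ᵇ ℝ) with hγ
  set r : Fin m → ℝ := fun j => p (γ j) with hrdef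
  -- r is cluster point of averages₁
  have hr₁ : MapClusterPt r atTop
      fun l : Λ => fun j => (n₁ l : ℝ)⁻¹ * ∑ i, γ j (φ₁ l i) := by
    have hgc : Continuous fun q : WeakDual ℝ (X →ᵇ ℝ) => fun j => q (γ j) :=
      continuous_pi fun j => eval_continuous' (γ j)
    have := hp.continuousAt_comp (hgc.continuousAt)
    have heq : ((fun q : WeakDual ℝ (X →ᵇ ℝ) => fun j => q (γ j)) ∘
        fun l : Λ => emp (φ₁ l)) =
        fun l : Λ => fun j => (n₁ l : ℝ)⁻¹ * ∑ i, γ j (φ₁ l i) := by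
      funext l j
      simp [Function.comp, emp_apply]
    rwa [heq] at this
  have hr₂ := H m γ hr₁
  -- frequently in each coordinate-neighborhood
  have hV : (Set.univ.pi fun j : Fin m => t (γ j)) ∈ 𝓝 r := by
    refine set_pi_mem_nhds Set.finite_univ fun j _ => ?_
    exact ht (γ j)
  have hfreq := (mapClusterPt_iff_frequently.1 hr₂) _ hV
  refine hfreq.mono fun l hl => ?_
  apply hws
  refine Set.mem_preimage.2 (htw ?_)
  intro f hfI
  have hf : f = γ (e ⟨f, hIfin.mem_toFinset.2 hfI⟩) := by
    simp [hγ]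
  rw [hf]
  have h1 := hl (e ⟨f, hIfin.mem_toFinset.2 hfI⟩) (Set.mem_univ _)
  have h2 : emp (φ₂ l) (γ (e ⟨f, hIfin.mem_toFinset.2 hfI⟩)) ∈
      t (γ (e ⟨f, hIfin.mem_toFinset.2 hfI⟩)) := by
    rw [emp_apply]; exact h1
  exact h2

end Aux

theorem s_equivalent_iff_regularities_eq
    {X : Type*} [TopologicalSpace X] [DiscreteTopology X]
    {Λ : Type*} [Preorder Λ] [Nonempty Λ] [IsDirected Λ (· ≤ ·)]
    (n₁ n₂ : Λ → ℕ) (hn₁ : ∀ l, 0 < n₁ l) (hn₂ : ∀ l, 0 < n₂ l)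
    (φ₁ : ∀ l : Λ, Fin (n₁ l) → X) (φ₂ : ∀ l : Λ, Fin (n₂ l) → X) :
    (∀ (m : ℕ) (γ : Fin m → (X →ᵇ ℝ)),
        {r : Fin m → ℝ |
            MapClusterPt r atTop fun l : Λ => fun j => (n₁ l : ℝ)⁻¹ * ∑ i, γ j (φ₁ l i)} =
          {r : Fin m → ℝ |
            MapClusterPt r atTop fun l : Λ => fun j => (n₂ l : ℝ)⁻¹ * ∑ i, γ j (φ₂ l i)}) ↔
      {p : WeakDual ℝ (X →ᵇ ℝ) | MapClusterPt p atTop fun l : Λ => emp (φ₁ l)} =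
        {p : WeakDual ℝ (X →ᵇ ℝ) | MapClusterPt p atTop fun l : Λ => emp (φ₂ l)} := by
  constructor
  · intro H
    exact Set.Subset.antisymm
      (reg_subset n₁ n₂ φ₁ φ₂ fun m γ => (H m γ).le)
      (reg_subset n₂ n₁ φ₂ φ₁ fun m γ => (H m γ).ge)
  · intro H
    intro m γ
    exact Set.Subset.antisymm
      (avg_subset n₁ n₂ φ₁ φ₂ H.le m γ)
      (avg_subset n₂ n₁ φ₂ φ₁ H.ge m γ)
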